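/- Let α > 1 and let {T_v : v ∈ T} be i.i.d. mean-one exponentials indexed by the full binary tree T. For the hyperexplosion time L = sup_{s ∈ ∂T} Σ_{j=0}^∞ α^{-j} T_{s|j}, there exist constants c, t_0 > 0 such that P(L ≥ t) ≤ c e^{-(α-1)t/α} for all t ≥ t_0. -/

import Mathlib

open MeasureTheory ProbabilityTheory
open scoped ENNReal

/-- The exponential distribution with rate 1 on `ℝ`. -/
noncomputable def expMeasure1 : Measure ℝ :=
  volume.withDensity fun x => ENNReal.ofReal (if 0 ≤ x then Real.exp (-x) else 0)

lemma expMeasure1_Ici (x : ℝ) (hx : 0 ≤ x) :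
    expMeasure1 (Set.Ici x) = ENNReal.ofReal (Real.exp (-x)) := by
  rw [expMeasure1, withDensity_apply _ measurableSet_Ici]
  have h1 : (∫⁻ y in Set.Ici x, ENNReal.ofReal (if 0 ≤ y then Real.exp (-y) else 0))
      = ∫⁻ y in Set.Ici x, ENNReal.ofReal (Real.exp (-y)) :=
    setLIntegral_congr_fun measurableSet_Ici (
      fun y hy => by rw [if_pos (hx.trans hy)])
  rw [h1, ← ofReal_integral_eq_lintegral_ofReal]
  · rw [MeasureTheory.integral_Ici_eq_integral_Ioi, integral_exp_neg_Ioi]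
  · have : IntegrableOn (fun y : ℝ => Real.exp (-1 * y)) (Set.Ioi x) :=
      exp_neg_integrableOn_Ioi x one_pos
    simp only [neg_one_mul] at this
    exact (integrableOn_Ici_iff_integrableOn_Ioi).mpr this
  · exact Filter.Eventually.of_forall fun y => (Real.exp_pos _).le

/-- The hyperexplosion time `L = sup_{s ∈ ∂T} Σ_{j=0}^∞ α^{-j} T_{s|j}` of the binary
ASA cascade, valued in `ℝ≥0∞`. Rays are functions `ℕ → Bool` and `s|j` is the length-`j`
prefix of `s`. -/
noncomputable def hyperexplosionTime {Ω : Type*} (α : ℝ) (T : List Bool → Ω → ℝ)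
    (ω : Ω) : ℝ≥0∞ :=
  ⨆ s : ℕ → Bool, ∑' j : ℕ,
    ENNReal.ofReal ((1 / α) ^ j * T (List.ofFn fun i : Fin j => s i) ω)

/-- For `α > 1` and i.i.d. mean-one exponentials `(T_v)` indexed by the full
binary tree, there exist `c, t₀ > 0` with `P(L ≥ t) ≤ c e^{-(α-1)t/α}` for all `t ≥ t₀`. -/
theorem hyperexplosion_tail_bound {Ω : Type*} [MeasurableSpace Ω]
    (μ : Measure Ω) [IsProbabilityMeasure μ]
    (α : ℝ) (hα : 1 < α)
    (T : List Bool → Ω → ℝ) (hTmeas : ∀ v, Measurable (T v))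
    (hindep : iIndepFun T μ)
    (hdist : ∀ v, Measure.map (T v) μ = expMeasure1) :
    ∃ c t₀ : ℝ, 0 < c ∧ 0 < t₀ ∧ ∀ t : ℝ, t₀ ≤ t →
      μ {ω | ENNReal.ofReal t ≤ hyperexplosionTime α T ω}
        ≤ ENNReal.ofReal (c * Real.exp (-((α - 1) / α) * t)) := by
  have hα0 : (0:ℝ) < α := lt_trans one_pos hα
  have hα1 : (0:ℝ) < α - 1 := sub_pos.mpr hα
  set lam : ℝ := (α - 1) / α with hlamdef
  set b : ℝ := Real.log 4 with hbdef
  have hlam : 0 < lam := div_pos hα1 hα0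
  have hb : 0 < b := Real.log_pos (by norm_num)
  set r : ℝ := 1 / α with hrdef
  have hr0 : 0 ≤ r := by positivity
  have hr1 : r < 1 := by
    rw [hrdef, div_lt_one hα0]; linarith
  refine ⟨2 * Real.exp (lam + b / (α - 1)), 1 + (b / (α - 1)) / lam, by positivity,
    by positivity, ?_⟩
  intro t ht
  have ht1 : (1:ℝ) < t := by
    have : 0 < (b / (α - 1)) / lam := by positivity
    linarith
  set a : ℝ := lam * (t - 1) - b / (α - 1) with hadef
  have ha0 : 0 ≤ a := by
    have h1 : (b / (α - 1)) / lam ≤ t - 1 := by linarith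
    have := (div_le_iff₀' hlam).mp h1
    rw [hadef]; linarith [this]
  -- summability and value of the threshold series
  have hsum : Summable (fun j : ℕ => (a + b * j) * r ^ j) := by
    have h1 : Summable (fun j : ℕ => a * r ^ j) :=
      (summable_geometric_of_lt_one hr0 hr1).mul_left a
    have h2 : Summable (fun j : ℕ => b * ((j : ℝ) * r ^ j)) := by
      have := summable_pow_mul_geometric_of_norm_lt_one (R := ℝ) 1
        (r := r) (by rwa [Real.norm_eq_abs, abs_of_nonneg hr0])
      simpa [pow_one] using this.mul_left b
    have := h1.add h2
    refine this.congr fun j => ?_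
    ring
  have hval : (∑' j : ℕ, (a + b * j) * r ^ j) = t - 1 := by
    have h1 : Summable (fun j : ℕ => a * r ^ j) :=
      (summable_geometric_of_lt_one hr0 hr1).mul_left a
    have h2 : Summable (fun j : ℕ => b * ((j : ℝ) * r ^ j)) := by
      have := summable_pow_mul_geometric_of_norm_lt_one (R := ℝ) 1
        (r := r) (by rwa [Real.norm_eq_abs, abs_of_nonneg hr0])
      simpa [pow_one] using this.mul_left b
    have hsplit : (∑' j : ℕ, (a + b * j) * r ^ j)
        = (∑' j : ℕ, a * r ^ j) + ∑' j : ℕ, b * ((j : ℝ) * r ^ j) := by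
      rw [← Summable.tsum_add h1 h2]
      exact tsum_congr fun j => by ring
    rw [hsplit, tsum_mul_left, tsum_mul_left, tsum_geometric_of_lt_one hr0 hr1,
      tsum_coe_mul_geometric_of_norm_lt_one
        (𝕜 := ℝ) (by rwa [Real.norm_eq_abs, abs_of_nonneg hr0])]
    rw [hadef, hlamdef, hrdef]
    have hαne : α ≠ 0 := ne_of_gt hα0
    have hα1ne : α - 1 ≠ 0 := ne_of_gt hα1
    field_simp
    ring
  have hpos : ∀ j : ℕ, 0 ≤ (a + b * j) * r ^ j := by
    intro j
    have : 0 ≤ a + b * j := by positivity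
    positivity
  -- event inclusion
  have hsub : {ω | ENNReal.ofReal t ≤ hyperexplosionTime α T ω} ⊆
      ⋃ j : ℕ, ⋃ v : Fin j → Bool, {ω | a + b * j ≤ T (List.ofFn v) ω} := by
    intro ω hω
    by_contra hc
    simp only [Set.mem_iUnion, not_exists, Set.mem_setOf_eq, not_le] at hc
    have hL : hyperexplosionTime α T ω ≤ ENNReal.ofReal (t - 1) := by
      rw [hyperexplosionTime]
      refine iSup_le fun s => ?_
      calc (∑' j : ℕ, ENNReal.ofReal ((1 / α) ^ j * T (List.ofFn fun i : Fin j => s i) ω))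
          ≤ ∑' j : ℕ, ENNReal.ofReal ((a + b * j) * r ^ j) := by
            refine ENNReal.tsum_le_tsum fun j => ENNReal.ofReal_le_ofReal ?_
            rw [mul_comm, ← hrdef]
            exact mul_le_mul_of_nonneg_right (hc j _).le (by positivity)
        _ = ENNReal.ofReal (t - 1) := by
            rw [← ENNReal.ofReal_tsum_of_nonneg hpos hsum, hval]
    have h2 : ENNReal.ofReal t ≤ ENNReal.ofReal (t - 1) := le_trans hω hL
    have h3 : ENNReal.ofReal (t - 1) < ENNReal.ofReal t :=
      (ENNReal.ofReal_lt_ofReal_iff (by linarith)).mpr (by linarith)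
    exact absurd h2 (not_le.mpr h3)
  -- measure of each event
  have hev : ∀ (j : ℕ) (v : Fin j → Bool),
      μ {ω | a + b * j ≤ T (List.ofFn v) ω} = ENNReal.ofReal (Real.exp (-(a + b * j))) := by
    intro j v
    have hset : {ω | a + b * j ≤ T (List.ofFn v) ω}
        = T (List.ofFn v) ⁻¹' Set.Ici (a + b * j) := rfl
    rw [hset, ← Measure.map_apply (hTmeas _) measurableSet_Ici, hdist,
      expMeasure1_Ici _ (by positivity)]
  -- per-level bound
  have hlevel : ∀ j : ℕ,
      μ (⋃ v : Fin j → Bool, {ω | a + b * j ≤ T (List.ofFn v) ω})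
        ≤ ENNReal.ofReal (Real.exp (-a) * (1 / 2) ^ j) := by
    intro j
    refine le_trans (measure_iUnion_fintype_le _ _) (le_of_eq ?_)
    have hcard : Fintype.card (Fin j → Bool) = 2 ^ j := by
      rw [Fintype.card_fun]; simp
    calc (∑ v : Fin j → Bool, μ {ω | a + b * j ≤ T (List.ofFn v) ω})
        = ∑ v : Fin j → Bool, ENNReal.ofReal (Real.exp (-(a + b * j))) := by
          exact Finset.sum_congr rfl fun v _ => hev j v
      _ = (2 ^ j : ℕ) * ENNReal.ofReal (Real.exp (-(a + b * j))) := by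
          rw [Finset.sum_const, Finset.card_univ, hcard, nsmul_eq_mul]
      _ = ENNReal.ofReal ((2 : ℝ) ^ j * Real.exp (-(a + b * j))) := by
          rw [ENNReal.ofReal_mul (by positivity),
            ENNReal.ofReal_pow (by norm_num : (0:ℝ) ≤ 2)]
          norm_num
      _ = ENNReal.ofReal (Real.exp (-a) * (1 / 2) ^ j) := by
          congr 1
          have hexpb : Real.exp (-b) = 1 / 4 := by
            rw [hbdef, Real.exp_neg, Real.exp_log (by norm_num)]
            norm_num
          have : Real.exp (-(a + b * j)) = Real.exp (-a) * (Real.exp (-b)) ^ j := by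
            rw [← Real.exp_nat_mul, ← Real.exp_add]
            ring_nf
          have h24 : ((1:ℝ) / 2) ^ j = 2 ^ j * ((1:ℝ) / 4) ^ j := by
            rw [← mul_pow]; norm_num
          rw [this, hexpb, h24]
          ring
  -- assemble
  calc μ {ω | ENNReal.ofReal t ≤ hyperexplosionTime α T ω}
      ≤ μ (⋃ j : ℕ, ⋃ v : Fin j → Bool, {ω | a + b * j ≤ T (List.ofFn v) ω}) :=
        measure_mono hsub
    _ ≤ ∑' j : ℕ, μ (⋃ v : Fin j → Bool, {ω | a + b * j ≤ T (List.ofFn v) ω}) :=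
        measure_iUnion_le _
    _ ≤ ∑' j : ℕ, ENNReal.ofReal (Real.exp (-a) * (1 / 2) ^ j) :=
        ENNReal.tsum_le_tsum hlevel
    _ = ENNReal.ofReal (∑' j : ℕ, Real.exp (-a) * (1 / 2) ^ j) := by
        rw [ENNReal.ofReal_tsum_of_nonneg (fun j => by positivity)
          (((summable_geometric_of_lt_one (by norm_num) (by norm_num)).mul_left _))]
    _ = ENNReal.ofReal (2 * Real.exp (lam + b / (α - 1)) * Real.exp (-((α - 1) / α) * t)) := by
        congr 1
        rw [tsum_mul_left, tsum_geometric_of_lt_one (by norm_num) (by norm_num)]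
        rw [mul_assoc, ← Real.exp_add]
        have h1 : ((1:ℝ) - 1 / 2)⁻¹ = 2 := by norm_num
        have h2 : lam + b / (α - 1) + -((α - 1) / α) * t = -a := by
          rw [hadef, hlamdef]; ring
        rw [h1, h2]
        ring
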